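/- Let F̃₂(x,t;α,β) = x⁶ + (3t² + 25/3)x⁴ + (3t⁴ + 30t² − 125/9)x² + t⁶ + (17/3)t⁴ + (475/9)t² + 625/9 + 2αt(3x² − t² + 5/3) + 2βx(x² − 3t² − 1/3) + α² + β². Fix real parameters α and β. Then at every point (ξ,η,τ) ∈ ℝ³ where F̃₂(ξ − 3τ, η; α, β) > 0, the function v(ξ,η,τ) = 2·∂²/∂ξ² [ln F̃₂(ξ − 3τ, η; α, β)] satisfies the Kadomtsev–Petviashvili I equation (v_τ + 6·v·v_ξ + v_ξξξ)_ξ = 3·v_ηη. -/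

import Mathlib

/-- Partial derivative in the first variable `ξ`. -/
noncomputable def dXi (f : ℝ → ℝ → ℝ → ℝ) : ℝ → ℝ → ℝ → ℝ :=
  fun ξ η τ => deriv (fun s => f s η τ) ξ

/-- Partial derivative in the second variable `η`. -/
noncomputable def dEta (f : ℝ → ℝ → ℝ → ℝ) : ℝ → ℝ → ℝ → ℝ :=
  fun ξ η τ => deriv (fun s => f ξ s τ) η

/-- Partial derivative in the third variable `τ`. -/
noncomputable def dTau (f : ℝ → ℝ → ℝ → ℝ) : ℝ → ℝ → ℝ → ℝ :=
  fun ξ η τ => deriv (fun s => f ξ η s) τ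

/-- The KPI equation `(v_τ + 6 v v_ξ + v_ξξξ)_ξ = 3 v_ηη` at the point `(ξ,η,τ)`. -/
def KPIAt (v : ℝ → ℝ → ℝ → ℝ) (ξ η τ : ℝ) : Prop :=
  dXi (fun ξ' η' τ' => dTau v ξ' η' τ' + 6 * v ξ' η' τ' * dXi v ξ' η' τ'
      + dXi (dXi (dXi v)) ξ' η' τ') ξ η τ
    = 3 * dEta (dEta v) ξ η τ

/-- The KPI equation `(v_τ + 6 v v_ξ + v_ξξξ)_ξ = 3 v_ηη` on all of ℝ³. -/
def IsKPISolution (v : ℝ → ℝ → ℝ → ℝ) : Prop := ∀ ξ η τ : ℝ, KPIAt v ξ η τ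

/-- `F̃₂(x,t;α,β)`, the generalised rational polynomial from the Boussinesq equation. -/
noncomputable def F2tilde (x t α β : ℝ) : ℝ :=
  x ^ 6 + (3 * t ^ 2 + 25 / 3) * x ^ 4 + (3 * t ^ 4 + 30 * t ^ 2 - 125 / 9) * x ^ 2
    + t ^ 6 + (17 / 3) * t ^ 4 + (475 / 9) * t ^ 2 + 625 / 9
    + 2 * α * t * (3 * x ^ 2 - t ^ 2 + 5 / 3)
    + 2 * β * x * (x ^ 2 - 3 * t ^ 2 - 1 / 3) + α ^ 2 + β ^ 2

/-!
Along `x = ξ - 3τ`, `t = η`, the KPI equation for `v(ξ, η, τ) = u(x, t)` is the Boussinesq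
equation for `u`. Write `F = exp φ`. Hirota's bilinear expression `(D_x⁴ - 3 D_x² - 3 D_t²) F·F`
equals `2 F²` times the potential Boussinesq expression `φ_xxxx + 6 φ_xx² - 3 φ_xx - 3 φ_tt`.
Differentiating the potential equation twice in `x`, and moving the `t`-derivatives past the
`x`-derivatives, gives the Boussinesq equation for `u = 2 φ_xx`. For `F = F̃₂` the bilinear
expression vanishes identically, which is a polynomial identity.
-/

open Set Topology Real Polynomial
open scoped ContDiff

noncomputable def partialX (g : ℝ × ℝ → ℝ) (p : ℝ × ℝ) : ℝ := deriv (fun s => g (s, p.2)) p.1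

noncomputable def partialT (g : ℝ × ℝ → ℝ) (p : ℝ × ℝ) : ℝ := deriv (fun s => g (p.1, s)) p.2

local notation "∂ₓ" => partialX
local notation "∂ₜ" => partialT

theorem ContDiffOn.differentiableAt_of_isOpen {E F : Type*} [NormedAddCommGroup E]
    [NormedSpace ℝ E] [NormedAddCommGroup F] [NormedSpace ℝ F] {f : E → F} {s : Set E} {x : E}
    (hf : ContDiffOn ℝ ∞ f s) (hs : IsOpen s) (hx : x ∈ s) : DifferentiableAt ℝ f x :=
  (hf.differentiableOn (by simp)).differentiableAt (hs.mem_nhds hx)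

section PartialDerivatives

variable {g h : ℝ × ℝ → ℝ} {U : Set (ℝ × ℝ)} {p : ℝ × ℝ}

theorem DifferentiableAt.hasDerivAt_partialX (hg : DifferentiableAt ℝ g p) :
    HasDerivAt (fun s => g (s, p.2)) (∂ₓ g p) p.1 :=
  (hg.comp p.1 (differentiableAt_id.prodMk (differentiableAt_const p.2))).hasDerivAt

theorem DifferentiableAt.hasDerivAt_partialT (hg : DifferentiableAt ℝ g p) :
    HasDerivAt (fun s => g (p.1, s)) (∂ₜ g p) p.2 :=
  (hg.comp p.2 ((differentiableAt_const p.1).prodMk differentiableAt_id)).hasDerivAt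

theorem partialX_eq_fderiv (hg : DifferentiableAt ℝ g p) : ∂ₓ g p = fderiv ℝ g p (1, 0) :=
  (hg.hasFDerivAt.comp_hasDerivAt (f := fun s => (s, p.2)) p.1
    ((hasDerivAt_id _).prodMk (hasDerivAt_const _ _))).deriv

theorem partialT_eq_fderiv (hg : DifferentiableAt ℝ g p) : ∂ₜ g p = fderiv ℝ g p (0, 1) :=
  (hg.hasFDerivAt.comp_hasDerivAt (f := fun s => (p.1, s)) p.2
    ((hasDerivAt_const _ _).prodMk (hasDerivAt_id _))).deriv

theorem ContDiffOn.eqOn_partialX_fderiv (hg : ContDiffOn ℝ ∞ g U) (hU : IsOpen U) :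
    EqOn (∂ₓ g) (fun q => fderiv ℝ g q (1, 0)) U := fun _ hq =>
  partialX_eq_fderiv (hg.differentiableAt_of_isOpen hU hq)

theorem ContDiffOn.eqOn_partialT_fderiv (hg : ContDiffOn ℝ ∞ g U) (hU : IsOpen U) :
    EqOn (∂ₜ g) (fun q => fderiv ℝ g q (0, 1)) U := fun _ hq =>
  partialT_eq_fderiv (hg.differentiableAt_of_isOpen hU hq)

theorem ContDiffOn.hasDerivAt_partialX (hg : ContDiffOn ℝ ∞ g U) (hU : IsOpen U) (hp : p ∈ U) :
    HasDerivAt (fun s => g (s, p.2)) (∂ₓ g p) p.1 :=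
  (hg.differentiableAt_of_isOpen hU hp).hasDerivAt_partialX

theorem ContDiffOn.hasDerivAt_partialT (hg : ContDiffOn ℝ ∞ g U) (hU : IsOpen U) (hp : p ∈ U) :
    HasDerivAt (fun s => g (p.1, s)) (∂ₜ g p) p.2 :=
  (hg.differentiableAt_of_isOpen hU hp).hasDerivAt_partialT

theorem ContDiffOn.partialX (hg : ContDiffOn ℝ ∞ g U) (hU : IsOpen U) : ContDiffOn ℝ ∞ (∂ₓ g) U :=
  ((hg.fderiv_of_isOpen hU le_rfl).clm_apply contDiffOn_const).congr (hg.eqOn_partialX_fderiv hU)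

theorem ContDiffOn.partialT (hg : ContDiffOn ℝ ∞ g U) (hU : IsOpen U) : ContDiffOn ℝ ∞ (∂ₜ g) U :=
  ((hg.fderiv_of_isOpen hU le_rfl).clm_apply contDiffOn_const).congr (hg.eqOn_partialT_fderiv hU)

theorem Set.EqOn.partialX (hU : IsOpen U) (hgh : EqOn g h U) : EqOn (∂ₓ g) (∂ₓ h) U := by
  intro q hq
  have hline : ∀ᶠ s in 𝓝 q.1, (s, q.2) ∈ U :=
    (continuous_id.prodMk continuous_const).continuousAt.preimage_mem_nhds (hU.mem_nhds hq)
  exact Filter.EventuallyEq.deriv_eq (hline.mono fun s hs => hgh hs)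

theorem Set.EqOn.partialT (hU : IsOpen U) (hgh : EqOn g h U) : EqOn (∂ₜ g) (∂ₜ h) U := by
  intro q hq
  have hline : ∀ᶠ s in 𝓝 q.2, (q.1, s) ∈ U :=
    (continuous_const.prodMk continuous_id).continuousAt.preimage_mem_nhds (hU.mem_nhds hq)
  exact Filter.EventuallyEq.deriv_eq (hline.mono fun s hs => hgh hs)

theorem partialX_partialT_comm (hg : ContDiffOn ℝ ∞ g U) (hU : IsOpen U) :
    EqOn (∂ₓ (∂ₜ g)) (∂ₜ (∂ₓ g)) U := by
  intro q hq
  have hDq : DifferentiableAt ℝ (fderiv ℝ g) q :=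
    (hg.fderiv_of_isOpen hU le_rfl).differentiableAt_of_isOpen hU hq
  have hv (v : ℝ × ℝ) : DifferentiableAt ℝ (fun q => fderiv ℝ g q v) q :=
    hDq.clm_apply (differentiableAt_const v)
  rw [(hg.eqOn_partialT_fderiv hU).partialX hU hq, (hg.eqOn_partialX_fderiv hU).partialT hU hq,
    partialX_eq_fderiv (hv _), partialT_eq_fderiv (hv _),
    fderiv_clm_apply hDq (differentiableAt_const _),
    fderiv_clm_apply hDq (differentiableAt_const _)]
  -- both sides are now `D²g(q)` evaluated on `(1, 0)` and `(0, 1)`, in opposite orders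
  simpa using ((hg.contDiffAt (hU.mem_nhds hq)).isSymmSndFDerivAt
    (by simpa using WithTop.coe_le_coe.2 (le_top : (2 : ℕ∞) ≤ ⊤))) (1, 0) (0, 1)

theorem partialX_partialX_partialT_partialT_eqOn (hg : ContDiffOn ℝ ∞ g U) (hU : IsOpen U) :
    EqOn (∂ₓ (∂ₓ (∂ₜ (∂ₜ g)))) (∂ₜ (∂ₜ (∂ₓ (∂ₓ g)))) U := by
  have comm {f : ℝ × ℝ → ℝ} (hf : ContDiffOn ℝ ∞ f U) := partialX_partialT_comm hf hU
  have hgt := hg.partialT hU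
  intro q hq
  calc ∂ₓ (∂ₓ (∂ₜ (∂ₜ g))) q = ∂ₓ (∂ₜ (∂ₓ (∂ₜ g))) q := (comm hgt).partialX hU hq
    _ = ∂ₜ (∂ₓ (∂ₓ (∂ₜ g))) q := comm (hgt.partialX hU) hq
    _ = ∂ₜ (∂ₓ (∂ₜ (∂ₓ g))) q := ((comm hg).partialX hU).partialT hU hq
    _ = ∂ₜ (∂ₜ (∂ₓ (∂ₓ g))) q := (comm (hg.partialX hU)).partialT hU hq

theorem partialX_const_mul (c : ℝ) (g : ℝ × ℝ → ℝ) :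
    ∂ₓ (fun q => c * g q) = fun q => c * ∂ₓ g q :=
  funext fun _ => deriv_const_mul_field c

theorem partialT_const_mul (c : ℝ) (g : ℝ × ℝ → ℝ) :
    ∂ₜ (fun q => c * g q) = fun q => c * ∂ₜ g q :=
  funext fun _ => deriv_const_mul_field c

end PartialDerivatives

/-- `(D_x⁴ - 3 D_x² - 3 D_t²) F·F / 2` in Hirota's bilinear notation. -/
noncomputable def hirotaBoussinesq (F : ℝ × ℝ → ℝ) (q : ℝ × ℝ) : ℝ :=
  F q * ∂ₓ (∂ₓ (∂ₓ (∂ₓ F))) q - 4 * ∂ₓ F q * ∂ₓ (∂ₓ (∂ₓ F)) q + 3 * ∂ₓ (∂ₓ F) q ^ 2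
    - 3 * (F q * ∂ₓ (∂ₓ F) q - ∂ₓ F q ^ 2) - 3 * (F q * ∂ₜ (∂ₜ F) q - ∂ₜ F q ^ 2)

noncomputable def potentialBoussinesq (φ : ℝ × ℝ → ℝ) (q : ℝ × ℝ) : ℝ :=
  ∂ₓ (∂ₓ (∂ₓ (∂ₓ φ))) q + 6 * ∂ₓ (∂ₓ φ) q ^ 2 - 3 * ∂ₓ (∂ₓ φ) q - 3 * ∂ₜ (∂ₜ φ) q

/-- The Boussinesq equation `u_tt + u_xx - (u²)_xx - u_xxxx / 3 = 0`, multiplied by `-3`. -/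
def BoussinesqAt (u : ℝ × ℝ → ℝ) (p : ℝ × ℝ) : Prop :=
  ∂ₓ (fun q => -3 * ∂ₓ u q + 6 * u q * ∂ₓ u q + ∂ₓ (∂ₓ (∂ₓ u)) q) p = 3 * ∂ₜ (∂ₜ u) p

section Hirota

variable {F φ : ℝ × ℝ → ℝ} {U : Set (ℝ × ℝ)}

theorem hirota_x_eqOn (hφ : ContDiffOn ℝ ∞ φ U) (hU : IsOpen U)
    (hF : EqOn F (fun q => exp (φ q)) U) :
    EqOn (fun q => F q * ∂ₓ (∂ₓ (∂ₓ (∂ₓ F))) q - 4 * ∂ₓ F q * ∂ₓ (∂ₓ (∂ₓ F)) q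
        + 3 * ∂ₓ (∂ₓ F) q ^ 2 - 3 * (F q * ∂ₓ (∂ₓ F) q - ∂ₓ F q ^ 2))
      (fun q => F q ^ 2 * (∂ₓ (∂ₓ (∂ₓ (∂ₓ φ))) q + 6 * ∂ₓ (∂ₓ φ) q ^ 2 - 3 * ∂ₓ (∂ₓ φ) q)) U := by
  have hφx := hφ.partialX hU
  have hφxx := hφx.partialX hU
  have hφxxx := hφxx.partialX hU
  have h1 : EqOn (∂ₓ F) (fun q => exp (φ q) * ∂ₓ φ q) U := fun q hq => by
    rw [hF.partialX hU hq]
    exact (hφ.hasDerivAt_partialX hU hq).exp.deriv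
  have h2 : EqOn (∂ₓ (∂ₓ F)) (fun q => exp (φ q) * (∂ₓ (∂ₓ φ) q + ∂ₓ φ q ^ 2)) U :=
    fun q hq => by
      rw [h1.partialX hU hq]
      refine ((hφ.hasDerivAt_partialX hU hq).exp.fun_mul
        (hφx.hasDerivAt_partialX hU hq)).deriv.trans ?_
      ring
  have h3 : EqOn (∂ₓ (∂ₓ (∂ₓ F))) (fun q => exp (φ q) *
      (∂ₓ (∂ₓ (∂ₓ φ)) q + 3 * ∂ₓ φ q * ∂ₓ (∂ₓ φ) q + ∂ₓ φ q ^ 3)) U := fun q hq => by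
    rw [h2.partialX hU hq]
    refine ((hφ.hasDerivAt_partialX hU hq).exp.fun_mul ((hφxx.hasDerivAt_partialX hU hq).fun_add
      ((hφx.hasDerivAt_partialX hU hq).fun_pow 2))).deriv.trans ?_
    ring
  have h4 : EqOn (∂ₓ (∂ₓ (∂ₓ (∂ₓ F)))) (fun q => exp (φ q) *
      (∂ₓ (∂ₓ (∂ₓ (∂ₓ φ))) q + 4 * ∂ₓ φ q * ∂ₓ (∂ₓ (∂ₓ φ)) q + 3 * ∂ₓ (∂ₓ φ) q ^ 2
        + 6 * ∂ₓ φ q ^ 2 * ∂ₓ (∂ₓ φ) q + ∂ₓ φ q ^ 4)) U := fun q hq => by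
    have dφx := hφx.hasDerivAt_partialX hU hq
    rw [h3.partialX hU hq]
    refine ((hφ.hasDerivAt_partialX hU hq).exp.fun_mul (((hφxxx.hasDerivAt_partialX hU hq).fun_add
      ((dφx.const_mul 3).fun_mul (hφxx.hasDerivAt_partialX hU hq))).fun_add
      (dφx.fun_pow 3))).deriv.trans ?_
    ring
  intro q hq
  simp only [h4 hq, h3 hq, h2 hq, h1 hq, hF hq]
  ring

theorem hirota_t_eqOn (hφ : ContDiffOn ℝ ∞ φ U) (hU : IsOpen U)
    (hF : EqOn F (fun q => exp (φ q)) U) :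
    EqOn (fun q => F q * ∂ₜ (∂ₜ F) q - ∂ₜ F q ^ 2) (fun q => F q ^ 2 * ∂ₜ (∂ₜ φ) q) U := by
  have h1 : EqOn (∂ₜ F) (fun q => exp (φ q) * ∂ₜ φ q) U := fun q hq => by
    rw [hF.partialT hU hq]
    exact (hφ.hasDerivAt_partialT hU hq).exp.deriv
  have h2 : EqOn (∂ₜ (∂ₜ F)) (fun q => exp (φ q) * (∂ₜ (∂ₜ φ) q + ∂ₜ φ q ^ 2)) U :=
    fun q hq => by
      rw [h1.partialT hU hq]
      refine ((hφ.hasDerivAt_partialT hU hq).exp.fun_mul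
        ((hφ.partialT hU).hasDerivAt_partialT hU hq)).deriv.trans ?_
      ring
  intro q hq
  simp only [h2 hq, h1 hq, hF hq]
  ring

theorem hirotaBoussinesq_eqOn (hφ : ContDiffOn ℝ ∞ φ U) (hU : IsOpen U)
    (hF : EqOn F (fun q => exp (φ q)) U) :
    EqOn (hirotaBoussinesq F) (fun q => F q ^ 2 * potentialBoussinesq φ q) U := fun q hq => by
  have hx := hirota_x_eqOn hφ hU hF hq
  have ht := hirota_t_eqOn hφ hU hF hq
  simp only [hirotaBoussinesq, potentialBoussinesq] at hx ht ⊢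
  linear_combination hx - 3 * ht

theorem boussinesqAt_of_potential (hφ : ContDiffOn ℝ ∞ φ U) (hU : IsOpen U)
    (hE : EqOn (potentialBoussinesq φ) 0 U) {p : ℝ × ℝ} (hp : p ∈ U) :
    BoussinesqAt (fun q => 2 * ∂ₓ (∂ₓ φ) q) p := by
  set a := ∂ₓ (∂ₓ φ)
  have dx {g : ℝ × ℝ → ℝ} (hg : ContDiffOn ℝ ∞ g U) {q} (hq : q ∈ U) :=
    hg.hasDerivAt_partialX hU hq
  have vanish {g : ℝ × ℝ → ℝ} (hg : EqOn g 0 U) {q d} (hq : q ∈ U)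
      (hd : HasDerivAt (fun s => g (s, q.2)) d q.1) : d = 0 :=
    hd.deriv.symm.trans ((hg.partialX hU hq).trans (deriv_const _ _))
  have ha : ContDiffOn ℝ ∞ a U := (hφ.partialX hU).partialX hU
  have hax := ha.partialX hU
  have haxx := hax.partialX hU
  have haxxx := haxx.partialX hU
  have hφtt := (hφ.partialT hU).partialT hU
  have hE1 : EqOn (fun q => ∂ₓ (∂ₓ (∂ₓ a)) q + 12 * a q * ∂ₓ a q - 3 * ∂ₓ a q
      - 3 * ∂ₓ (∂ₜ (∂ₜ φ)) q) 0 U := fun q hq => by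
    have h := vanish hE hq ((((dx haxx hq).fun_add (((dx ha hq).fun_pow 2).const_mul 6)).fun_sub
      ((dx ha hq).const_mul 3)).fun_sub ((dx hφtt hq).const_mul 3))
    simp only [Pi.zero_apply]
    linear_combination h
  have hE2 := vanish hE1 hp ((((dx haxxx hp).fun_add (((dx ha hp).const_mul 12).fun_mul
    (dx hax hp))).fun_sub ((dx hax hp).const_mul 3)).fun_sub
    ((dx (hφtt.partialX hU) hp).const_mul 3))
  rw [partialX_partialX_partialT_partialT_eqOn hφ hU hp] at hE2
  unfold BoussinesqAt
  simp only [partialX_const_mul, partialT_const_mul]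
  refine (((((dx hax hp).const_mul 2).const_mul (-3)).fun_add
    ((((dx ha hp).const_mul 2).const_mul 6).fun_mul ((dx hax hp).const_mul 2))).fun_add
    ((dx haxxx hp).const_mul 2)).deriv.trans ?_
  linear_combination 2 * hE2

end Hirota

theorem boussinesqAt_of_hirota {F : ℝ × ℝ → ℝ} {U : Set (ℝ × ℝ)} (hF : ContDiffOn ℝ ∞ F U)
    (hU : IsOpen U) (hpos : ∀ q ∈ U, 0 < F q) (hB : EqOn (hirotaBoussinesq F) 0 U)
    {p : ℝ × ℝ} (hp : p ∈ U) :
    BoussinesqAt (fun q => 2 * ∂ₓ (∂ₓ (fun q => log (F q))) q) p := by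
  have hφ : ContDiffOn ℝ ∞ (fun q => log (F q)) U := hF.log fun q hq => (hpos q hq).ne'
  refine boussinesqAt_of_potential hφ hU (fun q hq => ?_) hp
  have h := (hirotaBoussinesq_eqOn hφ hU (fun q hq => (exp_log (hpos q hq)).symm) hq).symm.trans
    (hB hq)
  exact (mul_eq_zero.1 h).resolve_left (pow_pos (hpos q hq) 2).ne'

noncomputable def travellingWave (c : ℝ) (u : ℝ × ℝ → ℝ) : ℝ → ℝ → ℝ → ℝ :=
  fun ξ η τ => u (ξ - c * τ, η)

section TravellingWave

variable (c : ℝ) (u : ℝ × ℝ → ℝ)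

theorem dXi_travellingWave : dXi (travellingWave c u) = travellingWave c (∂ₓ u) := by
  funext ξ η τ
  exact deriv_comp_sub_const (f := fun s => u (s, η)) _ _

theorem dEta_travellingWave : dEta (travellingWave c u) = travellingWave c (∂ₜ u) := rfl

theorem dTau_travellingWave :
    dTau (travellingWave c u) = travellingWave c (fun q => -c * ∂ₓ u q) := by
  funext ξ η τ
  have h := deriv_comp_mul_left c (fun y => u (ξ - y, η)) τ
  rw [deriv_comp_const_sub (f := fun s => u (s, η)), smul_eq_mul] at h
  exact h.trans (neg_mul_comm c _).symm

theorem kpiAt_travellingWave_iff (ξ η τ : ℝ) :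
    KPIAt (travellingWave 3 u) ξ η τ ↔ BoussinesqAt u (ξ - 3 * τ, η) := by
  unfold KPIAt
  rw [dTau_travellingWave, dXi_travellingWave, dXi_travellingWave, dXi_travellingWave,
    dEta_travellingWave, dEta_travellingWave]
  change dXi (travellingWave 3
    (fun q => -3 * ∂ₓ u q + 6 * u q * ∂ₓ u q + ∂ₓ (∂ₓ (∂ₓ u)) q)) ξ η τ = _ ↔ _
  rw [dXi_travellingWave]
  rfl

end TravellingWave

theorem partialX_eq_eval_derivative {g : ℝ × ℝ → ℝ} {P : ℝ → ℝ[X]}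
    (hg : ∀ x t, g (x, t) = (P t).eval x) (x t : ℝ) :
    ∂ₓ g (x, t) = (derivative (P t)).eval x := by
  show deriv (fun s => g (s, t)) x = _
  simp only [hg]
  exact Polynomial.deriv _

theorem partialT_eq_eval_derivative {g : ℝ × ℝ → ℝ} {P : ℝ → ℝ[X]}
    (hg : ∀ x t, g (x, t) = (P x).eval t) (x t : ℝ) :
    ∂ₜ g (x, t) = (derivative (P x)).eval t := by
  show deriv (fun s => g (x, s)) t = _
  simp only [hg]
  exact Polynomial.deriv _

theorem hirotaBoussinesq_F2tilde (α β : ℝ) :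
    hirotaBoussinesq (fun q => F2tilde q.1 q.2 α β) = 0 := by
  set F : ℝ × ℝ → ℝ := fun q => F2tilde q.1 q.2 α β
  have hx0 : ∀ x t, F (x, t) = eval x (X ^ 6 + C (3 * t ^ 2 + 25 / 3) * X ^ 4
      + C (2 * β) * X ^ 3 + C (3 * t ^ 4 + 30 * t ^ 2 - 125 / 9 + 6 * α * t) * X ^ 2
      + C (-6 * β * t ^ 2 - 2 / 3 * β) * X
      + C (t ^ 6 + 17 / 3 * t ^ 4 + 475 / 9 * t ^ 2 + 625 / 9 + 2 * α * t * (5 / 3 - t ^ 2)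
        + α ^ 2 + β ^ 2)) := by
    intro x t; simp only [F, F2tilde, eval_add, eval_mul, eval_pow, eval_C, eval_X]; ring
  have ht0 : ∀ x t, F (x, t) = eval t (X ^ 6 + C (3 * x ^ 2 + 17 / 3) * X ^ 4
      + C (-2 * α) * X ^ 3 + C (3 * x ^ 4 + 30 * x ^ 2 + 475 / 9 - 6 * β * x) * X ^ 2
      + C (6 * α * x ^ 2 + 10 / 3 * α) * X
      + C (x ^ 6 + 25 / 3 * x ^ 4 - 125 / 9 * x ^ 2 + 625 / 9 + 2 * β * x * (x ^ 2 - 1 / 3)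
        + α ^ 2 + β ^ 2)) := by
    intro x t; simp only [F, F2tilde, eval_add, eval_mul, eval_pow, eval_C, eval_X]; ring
  have hx1 := partialX_eq_eval_derivative hx0
  have hx2 := partialX_eq_eval_derivative hx1
  have hx3 := partialX_eq_eval_derivative hx2
  have hx4 := partialX_eq_eval_derivative hx3
  have ht1 := partialT_eq_eval_derivative ht0
  have ht2 := partialT_eq_eval_derivative ht1
  funext ⟨x, t⟩
  simp only [hirotaBoussinesq, hx4, hx3, hx2, hx1, ht2, ht1, hx0, derivative_add, derivative_mul,
    derivative_X_pow, derivative_C, derivative_X, eval_add, eval_mul, eval_pow, eval_C, eval_X,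
    Pi.zero_apply]
  norm_num
  ring

theorem kpi_from_boussinesq_rational (α β : ℝ) :
    ∀ ξ η τ : ℝ, 0 < F2tilde (ξ - 3 * τ) η α β →
      KPIAt (fun ξ' η' τ' =>
        2 * dXi (dXi (fun ξ'' η'' τ'' =>
          Real.log (F2tilde (ξ'' - 3 * τ'') η'' α β))) ξ' η' τ') ξ η τ := by
  intro ξ η τ hpos
  set F : ℝ × ℝ → ℝ := fun q => F2tilde q.1 q.2 α β
  have hF : ContDiff ℝ ∞ F := by unfold F F2tilde; fun_prop
  have hU : IsOpen {q | 0 < F q} := isOpen_lt continuous_const hF.continuous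
  have hB := boussinesqAt_of_hirota hF.contDiffOn hU (fun q hq => hq)
    (fun q _ => congrFun (hirotaBoussinesq_F2tilde α β) q) (show (ξ - 3 * τ, η) ∈ _ from hpos)
  rw [← kpiAt_travellingWave_iff] at hB
  change KPIAt (fun ξ' η' τ' =>
    2 * dXi (dXi (travellingWave 3 (fun q => log (F q)))) ξ' η' τ') ξ η τ
  rwa [dXi_travellingWave, dXi_travellingWave]
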